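/- If ⟪-,-⟫ is a double bracket on A associated with the outer bimodule structure, then its double Jacobiator satisfies ⟪a,b,c₁c₂⟫ = (c₁⊗1⊗1)·⟪a,b,c₂⟫ + ⟪a,b,c₁⟫·(1⊗1⊗c₂) for all a,b,c₁,c₂ ∈ A, where products on A⊗A⊗A are taken factorwise; consequently the double Jacobiator is a derivation in each of its three entries. -/
import Mathlib


open scoped TensorProduct

noncomputable section

/-- A (`k`-linear) `A`-bimodule-type structure on a `k`-module `M`,
given by a three-slot action `a · d · b`. -/
structure BimodOn (k A M : Type*) [CommSemiring k] [Ring A] [Algebra k A]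
    [AddCommMonoid M] [Module k M] where
  act : A → M → A → M
  add_left : ∀ (a a' : A) (d : M) (b : A), act (a + a') d b = act a d b + act a' d b
  add_mid : ∀ (a : A) (d d' : M) (b : A), act a (d + d') b = act a d b + act a d' b
  add_right : ∀ (a : A) (d : M) (b b' : A), act a d (b + b') = act a d b + act a d b'
  smul_left : ∀ (c : k) (a : A) (d : M) (b : A), act (c • a) d b = c • act a d b
  smul_mid : ∀ (c : k) (a : A) (d : M) (b : A), act a (c • d) b = c • act a d b
  smul_right : ∀ (c : k) (a : A) (d : M) (b : A), act a d (c • b) = c • act a d b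
  act_one_one : ∀ d : M, act 1 d 1 = d
  act_mul : ∀ (a a' : A) (d : M) (b b' : A), act a (act a' d b') b = act (a * a') d (b' * b)

/-- An `A`-bimodule structure on `A ⊗[k] A`. -/
abbrev BimodStr (k A : Type*) [CommSemiring k] [Ring A] [Algebra k A] :=
  BimodOn k A (A ⊗[k] A)

section Defs

variable (k A : Type*) [CommSemiring k] [Ring A] [Algebra k A]

/-- The swap automorphism `°` of `A ⊗[k] A`, `a ⊗ b ↦ b ⊗ a`. -/
def swapT : A ⊗[k] A →ₗ[k] A ⊗[k] A := (TensorProduct.comm k A A).toLinearMap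

variable {k A}

namespace BimodOn

/-- The swap bimodule structure `a * d * b = (a · d° · b)°` associated with a
bimodule structure on `A ⊗[k] A`. -/
def star (S : BimodStr k A) (a : A) (d : A ⊗[k] A) (b : A) : A ⊗[k] A :=
  swapT k A (S.act a (swapT k A d) b)

/-- A bimodule structure on `A ⊗[k] A` is swap-commuting if it commutes with its
swap bimodule structure. -/
def SwapCommuting (S : BimodStr k A) : Prop :=
  ∀ (a₁ a₂ b₁ b₂ : A) (d : A ⊗[k] A),
    S.act a₁ (S.star a₂ d b₂) b₁ = S.star a₂ (S.act a₁ d b₁) b₂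

end BimodOn

end Defs

/-- A double bracket on `A` associated with a bimodule structure `S` on `A ⊗[k] A`
(with swap bimodule structure `S.star`). -/
structure DoubleBracket {k A : Type*} [CommSemiring k] [Ring A] [Algebra k A]
    (S : BimodStr k A) where
  br : A →ₗ[k] A →ₗ[k] A ⊗[k] A
  antisymm : ∀ a b : A, br a b = - swapT k A (br b a)
  leibniz_right : ∀ a b c : A, br a (b * c) = S.act b (br a c) 1 + S.act 1 (br a b) c
  leibniz_left : ∀ a b c : A, br (b * c) a = S.star b (br c a) 1 + S.star 1 (br b a) c

section Taus

variable (k A : Type*) [CommSemiring k] [Ring A] [Algebra k A]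

/-- `τ_{(123)}` on `A^{⊗3}`: `a ⊗ b ⊗ c ↦ c ⊗ a ⊗ b`. -/
def tau123 : (A ⊗[k] A) ⊗[k] A →ₗ[k] (A ⊗[k] A) ⊗[k] A :=
  ((TensorProduct.comm k (A ⊗[k] A) A).trans (TensorProduct.assoc k A A A).symm).toLinearMap

/-- `τ_{(132)}` on `A^{⊗3}`: `a ⊗ b ⊗ c ↦ b ⊗ c ⊗ a`. -/
def tau132 : (A ⊗[k] A) ⊗[k] A →ₗ[k] (A ⊗[k] A) ⊗[k] A :=
  ((TensorProduct.assoc k A A A).trans (TensorProduct.comm k A (A ⊗[k] A))).toLinearMap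

/-- `τ_{(12)}` on `A^{⊗3}`: `a ⊗ b ⊗ c ↦ b ⊗ a ⊗ c`. -/
def tau12 : (A ⊗[k] A) ⊗[k] A →ₗ[k] (A ⊗[k] A) ⊗[k] A :=
  (TensorProduct.congr (TensorProduct.comm k A A) (LinearEquiv.refl k A)).toLinearMap

variable {k A}

/-- `⟪a, -⟫_L : A ⊗ A → A ⊗ A ⊗ A`, `b₁ ⊗ b₂ ↦ ⟪a, b₁⟫ ⊗ b₂`. -/
def trL (br : A →ₗ[k] A →ₗ[k] A ⊗[k] A) (a : A) :
    A ⊗[k] A →ₗ[k] (A ⊗[k] A) ⊗[k] A :=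
  TensorProduct.map (br a) LinearMap.id

/-- The double Jacobiator of a bilinear operation `A × A → A ⊗ A`:
`⟪a,b,c⟫ = ⟪a,⟪b,c⟫⟫_L + τ_{(123)} ⟪b,⟪c,a⟫⟫_L + τ_{(132)} ⟪c,⟪a,b⟫⟫_L`. -/
def jac (br : A →ₗ[k] A →ₗ[k] A ⊗[k] A) (a b c : A) : (A ⊗[k] A) ⊗[k] A :=
  trL br a (br b c) + tau123 k A (trL br b (br c a)) + tau132 k A (trL br c (br a b))

end Taus

end

noncomputable section Aux

open TensorProduct

variable {k A : Type*} [CommSemiring k] [Ring A] [Algebra k A]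

@[simp] lemma swapT_tmul (x y : A) : swapT k A (x ⊗ₜ[k] y) = y ⊗ₜ[k] x := rfl

@[simp] lemma tau123_tmul (x y z : A) :
    tau123 k A ((x ⊗ₜ[k] y) ⊗ₜ[k] z) = (z ⊗ₜ[k] x) ⊗ₜ[k] y := by
  simp [tau123]

@[simp] lemma tau132_tmul (x y z : A) :
    tau132 k A ((x ⊗ₜ[k] y) ⊗ₜ[k] z) = (y ⊗ₜ[k] z) ⊗ₜ[k] x := by
  simp [tau132]

@[simp] lemma trL_tmul (br : A →ₗ[k] A →ₗ[k] A ⊗[k] A) (a x y : A) :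
    trL br a (x ⊗ₜ[k] y) = br a x ⊗ₜ[k] y := rfl

lemma tau123_tau123 (u : (A ⊗[k] A) ⊗[k] A) :
    tau123 k A (tau123 k A u) = tau132 k A u := by
  induction u using TensorProduct.induction_on with
  | zero => simp
  | add u v hu hv => simp [map_add, hu, hv]
  | tmul x z =>
    induction x using TensorProduct.induction_on with
    | zero => simp [zero_tmul]
    | add x y hx hy => simp only [add_tmul, map_add, hx, hy]
    | tmul x y => simp

lemma tau123_tau132 (u : (A ⊗[k] A) ⊗[k] A) :
    tau123 k A (tau132 k A u) = u := by
  induction u using TensorProduct.induction_on with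
  | zero => simp
  | add u v hu hv => simp [map_add, hu, hv]
  | tmul x z =>
    induction x using TensorProduct.induction_on with
    | zero => simp [zero_tmul]
    | add x y hx hy => simp only [add_tmul, map_add, hx, hy]
    | tmul x y => simp

lemma tau123_mul_left (p q r : A) (v : (A ⊗[k] A) ⊗[k] A) :
    tau123 k A ((((p ⊗ₜ[k] q) ⊗ₜ[k] r)) * v)
      = ((r ⊗ₜ[k] p) ⊗ₜ[k] q) * tau123 k A v := by
  induction v using TensorProduct.induction_on with
  | zero => simp
  | add u w hu hw => simp only [mul_add, map_add, hu, hw]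
  | tmul x z =>
    induction x using TensorProduct.induction_on with
    | zero => simp [zero_tmul]
    | add x y hx hy => simp only [add_tmul, mul_add, map_add, hx, hy]
    | tmul x y => simp [Algebra.TensorProduct.tmul_mul_tmul]

lemma tau123_mul_right (p q r : A) (u : (A ⊗[k] A) ⊗[k] A) :
    tau123 k A (u * ((p ⊗ₜ[k] q) ⊗ₜ[k] r))
      = tau123 k A u * ((r ⊗ₜ[k] p) ⊗ₜ[k] q) := by
  induction u using TensorProduct.induction_on with
  | zero => simp
  | add u w hu hw => simp only [add_mul, map_add, hu, hw]
  | tmul x z =>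
    induction x using TensorProduct.induction_on with
    | zero => simp [zero_tmul]
    | add x y hx hy => simp only [add_tmul, add_mul, map_add, hx, hy]
    | tmul x y => simp [Algebra.TensorProduct.tmul_mul_tmul]

lemma tau132_mul_left (p q r : A) (v : (A ⊗[k] A) ⊗[k] A) :
    tau132 k A ((((p ⊗ₜ[k] q) ⊗ₜ[k] r)) * v)
      = ((q ⊗ₜ[k] r) ⊗ₜ[k] p) * tau132 k A v := by
  induction v using TensorProduct.induction_on with
  | zero => simp
  | add u w hu hw => simp only [mul_add, map_add, hu, hw]
  | tmul x z =>
    induction x using TensorProduct.induction_on with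
    | zero => simp [zero_tmul]
    | add x y hx hy => simp only [add_tmul, mul_add, map_add, hx, hy]
    | tmul x y => simp [Algebra.TensorProduct.tmul_mul_tmul]

lemma tau132_mul_right (p q r : A) (u : (A ⊗[k] A) ⊗[k] A) :
    tau132 k A (u * ((p ⊗ₜ[k] q) ⊗ₜ[k] r))
      = tau132 k A u * ((q ⊗ₜ[k] r) ⊗ₜ[k] p) := by
  induction u using TensorProduct.induction_on with
  | zero => simp
  | add u w hu hw => simp only [add_mul, map_add, hu, hw]
  | tmul x z =>
    induction x using TensorProduct.induction_on with
    | zero => simp [zero_tmul]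
    | add x y hx hy => simp only [add_tmul, add_mul, map_add, hx, hy]
    | tmul x y => simp [Algebra.TensorProduct.tmul_mul_tmul]

/-- cyclic symmetry of the Jacobiator -/
lemma jac_cyc (br : A →ₗ[k] A →ₗ[k] A ⊗[k] A) (a b c : A) :
    jac br a b c = tau123 k A (jac br b c a) := by
  simp only [jac, map_add, tau123_tau123, tau123_tau132]
  abel

lemma jac_cyc' (br : A →ₗ[k] A →ₗ[k] A ⊗[k] A) (a b c : A) :
    jac br a b c = tau132 k A (jac br c a b) := by
  rw [jac_cyc br a b c, jac_cyc br b c a, tau123_tau123]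

section E

variable (k A)

/-- `x ⊗ y ↦ (1 ⊗ x) ⊗ y` -/
def e23 : A ⊗[k] A →ₗ[k] (A ⊗[k] A) ⊗[k] A :=
  (TensorProduct.assoc k A A A).symm.toLinearMap ∘ₗ TensorProduct.mk k A (A ⊗[k] A) 1

/-- `u ↦ u ⊗ 1` -/
def e1 : A ⊗[k] A →ₗ[k] (A ⊗[k] A) ⊗[k] A :=
  (TensorProduct.mk k (A ⊗[k] A) A).flip 1

/-- `x ⊗ y ↦ (x ⊗ 1) ⊗ y` -/
def gmap : A ⊗[k] A →ₗ[k] (A ⊗[k] A) ⊗[k] A :=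
  TensorProduct.map ((TensorProduct.mk k A A).flip 1) LinearMap.id

variable {k A}

@[simp] lemma e23_tmul (x y : A) : e23 k A (x ⊗ₜ[k] y) = ((1:A) ⊗ₜ[k] x) ⊗ₜ[k] y := by
  simp [e23]

@[simp] lemma e1_apply (u : A ⊗[k] A) : e1 k A u = u ⊗ₜ[k] (1:A) := rfl

@[simp] lemma gmap_tmul (x y : A) : gmap k A (x ⊗ₜ[k] y) = (x ⊗ₜ[k] (1:A)) ⊗ₜ[k] y := rfl

/-- cancellation identity -/
lemma e_cancel (W Q : A ⊗[k] A) :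
    e1 k A (swapT k A W) * e23 k A Q = tau123 k A (gmap k A W * e1 k A Q) := by
  induction W using TensorProduct.induction_on with
  | zero => simp
  | add u v hu hv => simp only [map_add, add_mul, hu, hv]
  | tmul w v =>
    induction Q using TensorProduct.induction_on with
    | zero => simp
    | add u' v' hu hv => simp only [map_add, mul_add, hu, hv]
    | tmul q r =>
      simp [Algebra.TensorProduct.tmul_mul_tmul]

end E

end Aux

noncomputable section Core

variable {k A : Type*} [CommSemiring k] [Ring A] [Algebra k A]

lemma swapT_mul (u v : A ⊗[k] A) :
    swapT k A (u * v) = swapT k A u * swapT k A v := by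
  induction u using TensorProduct.induction_on with
  | zero => simp
  | add u w hu hw => simp only [add_mul, map_add, hu, hw]
  | tmul x y =>
    induction v using TensorProduct.induction_on with
    | zero => simp
    | add u w hu hw => simp only [mul_add, map_add, hu, hw]
    | tmul z w => simp [Algebra.TensorProduct.tmul_mul_tmul]

lemma swapT_swapT (u : A ⊗[k] A) : swapT k A (swapT k A u) = u := by
  induction u using TensorProduct.induction_on with
  | zero => simp
  | add u w hu hw => simp only [map_add, hu, hw]
  | tmul x y => simp

/-- Core computation: the Jacobiator is a derivation in its last entry. -/
lemma jac_deriv_c (br : A →ₗ[k] A →ₗ[k] A ⊗[k] A)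
    (han : ∀ a b : A, br a b = - swapT k A (br b a))
    (hR : ∀ a b c : A, br a (b * c)
      = (b ⊗ₜ[k] (1:A)) * br a c + br a b * ((1:A) ⊗ₜ[k] c))
    (hL : ∀ a b c : A, br (b * c) a
      = ((1:A) ⊗ₜ[k] b) * br c a + br b a * (c ⊗ₜ[k] (1:A)))
    (a b c₁ c₂ : A) :
    jac br a b (c₁ * c₂)
      = ((c₁ ⊗ₜ[k] (1:A)) ⊗ₜ[k] (1:A)) * jac br a b c₂
        + jac br a b c₁ * (((1:A) ⊗ₜ[k] (1:A)) ⊗ₜ[k] c₂) := by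
  have S1 : ∀ (a' c : A) (X : A ⊗[k] A), trL br a' ((c ⊗ₜ[k] (1:A)) * X)
      = ((c ⊗ₜ[k] (1:A)) ⊗ₜ[k] (1:A)) * trL br a' X + e1 k A (br a' c) * e23 k A X := by
    intro a' c X
    induction X using TensorProduct.induction_on with
    | zero => simp
    | add u w hu hw => simp only [mul_add, map_add, hu, hw]; abel
    | tmul x y =>
      simp only [Algebra.TensorProduct.tmul_mul_tmul, trL_tmul, e1_apply, e23_tmul,
        one_mul, mul_one, hR a' c x, TensorProduct.add_tmul]
  have S2 : ∀ (a' c : A) (X : A ⊗[k] A), trL br a' (X * ((1:A) ⊗ₜ[k] c))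
      = trL br a' X * (((1:A) ⊗ₜ[k] (1:A)) ⊗ₜ[k] c) := by
    intro a' c X
    induction X using TensorProduct.induction_on with
    | zero => simp
    | add u w hu hw => simp only [add_mul, map_add, hu, hw]
    | tmul x y =>
      simp [Algebra.TensorProduct.tmul_mul_tmul, ← Algebra.TensorProduct.one_def]
  have S3 : ∀ (b' c : A) (Z : A ⊗[k] A), trL br b' (((1:A) ⊗ₜ[k] c) * Z)
      = (((1:A) ⊗ₜ[k] (1:A)) ⊗ₜ[k] c) * trL br b' Z := by
    intro b' c Z
    induction Z using TensorProduct.induction_on with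
    | zero => simp
    | add u w hu hw => simp only [mul_add, map_add, hu, hw]
    | tmul x y =>
      simp [Algebra.TensorProduct.tmul_mul_tmul, ← Algebra.TensorProduct.one_def]
  have S4 : ∀ (b' c : A) (W : A ⊗[k] A), trL br b' (W * (c ⊗ₜ[k] (1:A)))
      = gmap k A W * e1 k A (br b' c)
        + trL br b' W * (((1:A) ⊗ₜ[k] c) ⊗ₜ[k] (1:A)) := by
    intro b' c W
    induction W using TensorProduct.induction_on with
    | zero => simp
    | add u w hu hw => simp only [add_mul, map_add, hu, hw]; abel
    | tmul x y =>
      simp only [Algebra.TensorProduct.tmul_mul_tmul, trL_tmul, e1_apply, gmap_tmul,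
        one_mul, mul_one, hR b' x c, TensorProduct.add_tmul]
  have S5 : ∀ (P : A ⊗[k] A), trL br (c₁ * c₂) P
      = (((1:A) ⊗ₜ[k] c₁) ⊗ₜ[k] (1:A)) * trL br c₂ P
        + trL br c₁ P * ((c₂ ⊗ₜ[k] (1:A)) ⊗ₜ[k] (1:A)) := by
    intro P
    induction P using TensorProduct.induction_on with
    | zero => simp
    | add u w hu hw => simp only [map_add, hu, hw, mul_add, add_mul]; abel
    | tmul p s =>
      simp only [trL_tmul, hL p c₁ c₂, TensorProduct.add_tmul, Algebra.TensorProduct.tmul_mul_tmul,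
        one_mul, mul_one]
  simp only [jac]
  rw [hR b c₁ c₂, hL a c₁ c₂, map_add, S1 a c₁ (br b c₂), S2 a c₂ (br b c₁),
    map_add, S3 b c₁ (br c₂ a), S4 b c₂ (br c₁ a), map_add, map_add,
    tau123_mul_left, tau123_mul_right, S5 (br a b), map_add,
    tau132_mul_left, tau132_mul_right, han a c₁, map_neg]
  rw [← e_cancel (br c₁ a) (br b c₂)]
  simp only [mul_add, add_mul]
  abel_nf
  simp only [smul_mul_assoc]
  abel

end Core

/-- Lemma `OutJac`: for a double bracket associated with the outer
bimodule structure `a · d · b = (a ⊗ 1) d (1 ⊗ b)`, the double Jacobiator satisfies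
`⟪a,b,c₁c₂⟫ = (c₁⊗1⊗1) ⟪a,b,c₂⟫ + ⟪a,b,c₁⟫ (1⊗1⊗c₂)` (factorwise products on `A^{⊗3}`),
and consequently it is a derivation in each of its three entries. -/
theorem outer_jacobiator_is_derivation
    {k A : Type*} [Field k] [CharZero k] [Ring A] [Algebra k A]
    (S : BimodStr k A)
    (hS : ∀ (a b : A) (d : A ⊗[k] A),
      S.act a d b = (a ⊗ₜ[k] (1 : A)) * d * ((1 : A) ⊗ₜ[k] b))
    (D : DoubleBracket S) :
    (∀ a b c₁ c₂ : A, jac D.br a b (c₁ * c₂)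
      = ((c₁ ⊗ₜ[k] (1 : A)) ⊗ₜ[k] (1 : A)) * jac D.br a b c₂
        + jac D.br a b c₁ * (((1 : A) ⊗ₜ[k] (1 : A)) ⊗ₜ[k] c₂)) ∧
    (∀ a b₁ b₂ c : A, jac D.br a (b₁ * b₂) c
      = (((1 : A) ⊗ₜ[k] (1 : A)) ⊗ₜ[k] b₁) * jac D.br a b₂ c
        + jac D.br a b₁ c * (((1 : A) ⊗ₜ[k] b₂) ⊗ₜ[k] (1 : A))) ∧
    (∀ a₁ a₂ b c : A, jac D.br (a₁ * a₂) b c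
      = (((1 : A) ⊗ₜ[k] a₁) ⊗ₜ[k] (1 : A)) * jac D.br a₂ b c
        + jac D.br a₁ b c * ((a₂ ⊗ₜ[k] (1 : A)) ⊗ₜ[k] (1 : A))) := by
  have hR : ∀ a b c : A, D.br a (b * c)
      = (b ⊗ₜ[k] (1:A)) * D.br a c + D.br a b * ((1:A) ⊗ₜ[k] c) := by
    intro a b c
    rw [D.leibniz_right, hS, hS]
    simp [← Algebra.TensorProduct.one_def]
  have hL : ∀ a b c : A, D.br (b * c) a
      = ((1:A) ⊗ₜ[k] b) * D.br c a + D.br b a * (c ⊗ₜ[k] (1:A)) := by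
    intro a b c
    rw [D.leibniz_left]
    simp only [BimodOn.star, hS, swapT_mul, swapT_swapT, swapT_tmul,
      ← Algebra.TensorProduct.one_def, one_mul, mul_one]
  have key := jac_deriv_c D.br D.antisymm hR hL
  refine ⟨key, ?_, ?_⟩
  · intro a b₁ b₂ c
    rw [jac_cyc' D.br a (b₁*b₂) c, key c a b₁ b₂, map_add,
      tau132_mul_left, tau132_mul_right, ← jac_cyc', ← jac_cyc']
  · intro a₁ a₂ b c
    rw [jac_cyc D.br (a₁*a₂) b c, key b c a₁ a₂, map_add,
      tau123_mul_left, tau123_mul_right, ← jac_cyc, ← jac_cyc]
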